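/- Let E ⊂ S be closed satisfying Σ_s for some s < n. Then there is C > 0 so that for every x ∈ S and 0 < R ≤ 1, ∫_{B(x,R)} log(1/d(z,E)) dσ(z) ≤ σ(B(x,R)) log(1/R) + C R^n. -/

import Mathlib

open MeasureTheory

noncomputable def dNI {n : ℕ} (x y : EuclideanSpace ℂ (Fin n)) : ℝ :=
  ‖1 - (inner ℂ y x : ℂ)‖

noncomputable def dE {n : ℕ} (E : Set (EuclideanSpace ℂ (Fin n)))
    (z : EuclideanSpace ℂ (Fin n)) : ℝ :=
  sInf (dNI z '' E)

def Sball {n : ℕ} (x : EuclideanSpace ℂ (Fin n)) (r : ℝ) :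
    Set (EuclideanSpace ℂ (Fin n)) :=
  {z | ‖z‖ = 1 ∧ dNI x z < r}

/-!
Split `log (1 / d) = log (1 / R) + log (R / d)` with `d = dE E`. By the layer-cake formula the
positive part of `log (R / d)` integrates to `∫_{t > 0} σ (B ∩ {d < R e^{-t}}) dt`, and `Σ_s`
bounds the integrand by `C R^s (R e^{-t})^{n-s} = C R^n e^{-(n-s)t}`, whose integral is
`C R^n / (n - s)`. The negative part of `log (1 / d)` is bounded by `d ≤ 2`.
-/

open Set Real

section LogIntegral

variable {α : Type*} [MeasurableSpace α] {μ : Measure α} {u : α → ℝ} {R K a : ℝ}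

lemma lt_mul_exp_neg_of_lt_log_div {y t : ℝ} (hR : 0 < R) (ht : t < log (R / y)) :
    y < R * exp (-t) := by
  rcases le_or_gt y 0 with hy | hy
  · exact hy.trans_lt (by positivity)
  · have h : exp t < R / y := (lt_log_iff_exp_lt (by positivity)).1 ht
    rw [exp_neg, ← div_eq_mul_inv, lt_div_iff₀ (exp_pos t), mul_comm]
    exact (lt_div_iff₀ hy).1 h

lemma log_inv_le_log_inv_add_posPart_log_div (hR : 0 < R) (hR1 : R ≤ 1) (y : ℝ) :
    log (1 / y) ≤ log (1 / R) + (log (R / y))⁺ := by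
  rcases eq_or_ne y 0 with rfl | hy
  · simpa using log_nonneg (one_le_one_div hR hR1)
  · have h : log (1 / y) = log (1 / R) + log (R / y) := by
      rw [← log_mul (by positivity) (div_ne_zero hR.ne' hy)]
      field_simp
    exact h ▸ add_le_add_right (le_posPart _) _

lemma neg_abs_le_log_one_div (y : ℝ) : -|y| ≤ log (1 / y) := by
  rw [one_div, log_inv, neg_le_neg_iff, ← log_abs]
  exact log_le_self (abs_nonneg y)

lemma lintegral_Ioi_ofReal_mul_exp_neg_mul {c : ℝ} (hc : 0 ≤ c) (ha : 0 < a) :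
    ∫⁻ t in Ioi 0, ENNReal.ofReal (c * exp (-a * t)) = ENNReal.ofReal (c / a) := by
  rw [← ofReal_integral_eq_lintegral_ofReal
      ((exp_neg_integrableOn_Ioi 0 ha).const_mul c) (ae_of_all _ fun t => by positivity),
    integral_const_mul, integral_exp_mul_Ioi (neg_neg_of_pos ha), mul_zero, exp_zero,
    neg_div_neg_eq, mul_one_div]

lemma lintegral_posPart_log_div_le (hR : 0 < R) (ha : 0 < a) (hK : 0 ≤ K)
    (hu : AEMeasurable u μ)
    (hsmall : ∀ ε, 0 < ε → ε < R → μ {x | u x < ε} ≤ ENNReal.ofReal (K * ε ^ a)) :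
    ∫⁻ x, ENNReal.ofReal (log (R / u x))⁺ ∂μ ≤ ENNReal.ofReal (K * R ^ a / a) := by
  have hmeas : AEMeasurable (fun x => (log (R / u x))⁺) μ := by fun_prop
  rw [lintegral_eq_lintegral_meas_lt μ (ae_of_all _ fun _ => posPart_nonneg _) hmeas]
  calc ∫⁻ t in Ioi 0, μ {x | t < (log (R / u x))⁺}
      ≤ ∫⁻ t in Ioi 0, ENNReal.ofReal (K * R ^ a * exp (-a * t)) := by
        refine setLIntegral_mono (by fun_prop) fun t (ht : 0 < t) => ?_
        have hε : 0 < R * exp (-t) := by positivity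
        have hεR : R * exp (-t) < R := mul_lt_of_lt_one_right hR (exp_lt_one_iff.2 (by linarith))
        calc μ {x | t < (log (R / u x))⁺} ≤ μ {x | u x < R * exp (-t)} :=
              measure_mono fun x hx => lt_mul_exp_neg_of_lt_log_div hR
                ((lt_max_iff.1 hx).resolve_right ht.not_gt)
          _ ≤ ENNReal.ofReal (K * (R * exp (-t)) ^ a) := hsmall _ hε hεR
          _ = ENNReal.ofReal (K * R ^ a * exp (-a * t)) := by
              rw [mul_rpow hR.le (exp_pos _).le, ← exp_mul]
              ring_nf
    _ = ENNReal.ofReal (K * R ^ a / a) :=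
        lintegral_Ioi_ofReal_mul_exp_neg_mul (by positivity) ha

lemma integral_log_one_div_le [IsFiniteMeasure μ] (hR : 0 < R) (hR1 : R ≤ 1) (ha : 0 < a)
    (hK : 0 ≤ K) (hu : Integrable u μ)
    (hsmall : ∀ ε, 0 < ε → ε < R → μ {x | u x < ε} ≤ ENNReal.ofReal (K * ε ^ a)) :
    ∫ x, log (1 / u x) ∂μ ≤ μ.real univ * log (1 / R) + K * R ^ a / a := by
  have hu_meas := hu.aemeasurable
  have hg_meas : AEStronglyMeasurable (fun x => (log (R / u x))⁺) μ :=
    (by fun_prop : AEMeasurable (fun x => (log (R / u x))⁺) μ).aestronglyMeasurable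
  set g := fun x => (log (R / u x))⁺
  have hg_nonneg : 0 ≤ᵐ[μ] g := ae_of_all _ fun _ => posPart_nonneg _
  have hg_lint := lintegral_posPart_log_div_le hR ha hK hu_meas hsmall
  have hg_int : Integrable g μ := ⟨hg_meas,
    (hasFiniteIntegral_iff_ofReal hg_nonneg).2 (hg_lint.trans_lt ENNReal.ofReal_lt_top)⟩
  have hg_le : ∫ x, g x ∂μ ≤ K * R ^ a / a := by
    rw [integral_eq_lintegral_of_nonneg_ae hg_nonneg hg_meas]
    exact ENNReal.toReal_le_of_le_ofReal (by positivity) hg_lint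
  have hlogR : 0 ≤ log (1 / R) := log_nonneg (one_le_one_div hR hR1)
  have hmajor : Integrable (fun x => log (1 / R) + g x) μ := (integrable_const _).add hg_int
  have hf_int : Integrable (fun x => log (1 / u x)) μ := by
    refine Integrable.mono' (hu.abs.add hmajor) (hu_meas.const_div 1).log.aestronglyMeasurable
      (ae_of_all _ fun x => ?_)
    have hlow := neg_abs_le_log_one_div (u x)
    have hup := log_inv_le_log_inv_add_posPart_log_div hR hR1 (u x)
    have hg := posPart_nonneg (log (R / u x))
    simp only [Pi.add_apply, norm_eq_abs, abs_le]
    constructor <;> linarith [abs_nonneg (u x)]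
  calc ∫ x, log (1 / u x) ∂μ ≤ ∫ x, (log (1 / R) + g x) ∂μ :=
        integral_mono hf_int hmajor fun x => log_inv_le_log_inv_add_posPart_log_div hR hR1 (u x)
    _ = μ.real univ * log (1 / R) + ∫ x, g x ∂μ := by
        rw [integral_add (integrable_const _) hg_int, integral_const, smul_eq_mul]
    _ ≤ μ.real univ * log (1 / R) + K * R ^ a / a := by gcongr

end LogIntegral

lemma lipschitzWith_sInf_image {X ι : Type*} [PseudoMetricSpace X] {f : X → ι → ℝ}
    {E : Set ι} {K : NNReal} (hE : E.Nonempty) (hbdd : ∀ z, BddBelow (f z '' E))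
    (hf : ∀ a ∈ E, LipschitzWith K (f · a)) :
    LipschitzWith K fun z => sInf (f z '' E) := by
  refine LipschitzWith.of_le_add_mul K fun z w => ?_
  rw [← sub_le_iff_le_add]
  refine le_csInf (hE.image _) ?_
  rintro _ ⟨a, ha, rfl⟩
  rw [sub_le_iff_le_add]
  exact (csInf_le (hbdd z) (mem_image_of_mem _ ha)).trans ((hf a ha).le_add_mul z w)

section Sphere

variable {n : ℕ} {E : Set (EuclideanSpace ℂ (Fin n))}

lemma dNI_nonneg (x y : EuclideanSpace ℂ (Fin n)) : 0 ≤ dNI x y :=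
  norm_nonneg _

lemma dNI_le_two {a z : EuclideanSpace ℂ (Fin n)} (ha : ‖a‖ ≤ 1) (hz : ‖z‖ ≤ 1) :
    dNI z a ≤ 2 :=
  calc dNI z a ≤ ‖(1 : ℂ)‖ + ‖(inner ℂ a z : ℂ)‖ := norm_sub_le _ _
    _ ≤ 1 + ‖a‖ * ‖z‖ := by rw [norm_one]; gcongr; exact norm_inner_le_norm a z
    _ ≤ 2 := by nlinarith [norm_nonneg a, norm_nonneg z]

lemma lipschitzWith_dNI_left {a : EuclideanSpace ℂ (Fin n)} (ha : ‖a‖ ≤ 1) :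
    LipschitzWith 1 fun z => dNI z a :=
  LipschitzWith.of_dist_le_mul fun z w =>
    calc dist (dNI z a) (dNI w a)
        ≤ ‖(1 - (inner ℂ a z : ℂ)) - (1 - inner ℂ a w)‖ := abs_norm_sub_norm_le _ _
      _ = ‖(inner ℂ a (z - w) : ℂ)‖ := by rw [inner_sub_right, norm_sub_rev]; ring_nf
      _ ≤ ‖a‖ * ‖z - w‖ := norm_inner_le_norm a _
      _ ≤ (1 : NNReal) * dist z w := by
        rw [NNReal.coe_one, dist_eq_norm]; gcongr

lemma dE_nonneg (z : EuclideanSpace ℂ (Fin n)) : 0 ≤ dE E z :=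
  Real.sInf_nonneg fun _ ⟨y, _, hy⟩ => hy ▸ dNI_nonneg z y

lemma bddBelow_image_dNI (z : EuclideanSpace ℂ (Fin n)) : BddBelow (dNI z '' E) :=
  ⟨0, fun _ ⟨y, _, hy⟩ => hy ▸ dNI_nonneg z y⟩

lemma lipschitzWith_dE (hE : E ⊆ Metric.closedBall 0 1) (hEne : E.Nonempty) :
    LipschitzWith 1 (dE E) :=
  lipschitzWith_sInf_image hEne bddBelow_image_dNI
    fun _ ha => lipschitzWith_dNI_left (mem_closedBall_zero_iff.1 (hE ha))

lemma dE_le_two (hE : E ⊆ Metric.closedBall 0 1) (hEne : E.Nonempty)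
    {z : EuclideanSpace ℂ (Fin n)} (hz : ‖z‖ ≤ 1) : dE E z ≤ 2 := by
  obtain ⟨a, ha⟩ := hEne
  exact (csInf_le (bddBelow_image_dNI z) (mem_image_of_mem _ ha)).trans
    (dNI_le_two (mem_closedBall_zero_iff.1 (hE ha)) hz)

lemma measurableSet_Sball [MeasurableSpace (EuclideanSpace ℂ (Fin n))]
    [BorelSpace (EuclideanSpace ℂ (Fin n))] (x : EuclideanSpace ℂ (Fin n)) (r : ℝ) :
    MeasurableSet (Sball x r) :=
  (isClosed_eq continuous_norm continuous_const).measurableSet.inter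
    (isOpen_lt (continuous_norm.comp (continuous_const.sub (continuous_id.inner continuous_const)))
      continuous_const).measurableSet

end Sphere

theorem sigma_implies_log_integral_bound_general (n : ℕ)
    [MeasurableSpace (EuclideanSpace ℂ (Fin n))]
    [BorelSpace (EuclideanSpace ℂ (Fin n))]
    (E : Set (EuclideanSpace ℂ (Fin n)))
    (hES : E ⊆ Metric.sphere 0 1) (hEne : E.Nonempty)
    (σ : Measure (EuclideanSpace ℂ (Fin n)))
    (s C : ℝ) (hs : s < n) (hC : 0 < C)
    (hSig : ∀ x : EuclideanSpace ℂ (Fin n), ‖x‖ = 1 → ∀ R ε : ℝ, 0 < ε → ε < R →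
      σ (Sball x R ∩ {z | ‖z‖ = 1 ∧ dE E z < ε}) ≤
        ENNReal.ofReal (C * R ^ s * ε ^ ((n : ℝ) - s))) :
    ∃ C' > 0, ∀ x : EuclideanSpace ℂ (Fin n), ‖x‖ = 1 → ∀ R : ℝ, 0 < R → R ≤ 1 →
      ∫ z in Sball x R, Real.log (1 / dE E z) ∂σ ≤
        (σ (Sball x R)).toReal * Real.log (1 / R) + C' * R ^ (n : ℝ) := by
  have ha : 0 < (n : ℝ) - s := sub_pos.2 hs
  have hE : E ⊆ Metric.closedBall 0 1 := hES.trans Metric.sphere_subset_closedBall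
  refine ⟨C / ((n : ℝ) - s), div_pos hC ha, fun x hx R hR hR1 => ?_⟩
  have hB := measurableSet_Sball x R
  -- Since `dE E ≤ 2` on the sphere, `Σ_s` at scale `3` bounds the measure of the whole ball.
  have hfin : σ (Sball x R) ≠ ⊤ := by
    refine ne_top_of_le_ne_top ENNReal.ofReal_ne_top
      ((measure_mono fun z hz => ?_).trans (hSig x hx 3 (5 / 2) (by norm_num) (by norm_num)))
    exact ⟨⟨hz.1, hz.2.trans_le (by linarith)⟩, hz.1,
      (dE_le_two hE hEne hz.1.le).trans_lt (by norm_num)⟩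
  have := isFiniteMeasure_restrict.2 hfin
  have hint : Integrable (dE E) (σ.restrict (Sball x R)) :=
    Integrable.of_bound (lipschitzWith_dE hE hEne).continuous.aestronglyMeasurable 2
      ((ae_restrict_iff' hB).2 (ae_of_all _ fun z hz => by
        rw [norm_of_nonneg (dE_nonneg z)]; exact dE_le_two hE hEne hz.1.le))
  have hsmall : ∀ ε, 0 < ε → ε < R → σ.restrict (Sball x R) {z | dE E z < ε} ≤
      ENNReal.ofReal (C * R ^ s * ε ^ ((n : ℝ) - s)) := fun ε hε hεR => by
    rw [Measure.restrict_apply' hB, inter_comm]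
    refine (measure_mono ?_).trans (hSig x hx R ε hε hεR)
    exact fun z hz => ⟨hz.1, hz.1.1, hz.2⟩
  have key := integral_log_one_div_le hR hR1 ha (by positivity) hint hsmall
  rw [measureReal_def, Measure.restrict_apply_univ, mul_assoc, ← rpow_add hR,
    add_sub_cancel] at key
  linarith [mul_div_right_comm C (R ^ (n : ℝ)) ((n : ℝ) - s)]

theorem sigma_implies_log_integral_bound (n : ℕ)
    [MeasurableSpace (EuclideanSpace ℂ (Fin n))]
    [BorelSpace (EuclideanSpace ℂ (Fin n))]
    (E : Set (EuclideanSpace ℂ (Fin n)))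
    (hEclosed : IsClosed E) (hES : E ⊆ Metric.sphere 0 1) (hEne : E.Nonempty)
    (σ : Measure (EuclideanSpace ℂ (Fin n)))
    (c₀ C₀ : ℝ) (hc₀ : 0 < c₀) (hC₀ : 0 < C₀)
    (hσlow : ∀ x : EuclideanSpace ℂ (Fin n), ‖x‖ = 1 → ∀ r : ℝ, 0 < r → r ≤ 1 →
      ENNReal.ofReal (c₀ * r ^ (n : ℝ)) ≤ σ (Sball x r))
    (hσup : ∀ x : EuclideanSpace ℂ (Fin n), ‖x‖ = 1 → ∀ r : ℝ, 0 < r →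
      σ (Sball x r) ≤ ENNReal.ofReal (C₀ * r ^ (n : ℝ)))
    (s C : ℝ) (hs : s < n) (hC : 0 < C)
    (hSig : ∀ x : EuclideanSpace ℂ (Fin n), ‖x‖ = 1 → ∀ R ε : ℝ, 0 < ε → ε < R →
      σ (Sball x R ∩ {z | ‖z‖ = 1 ∧ dE E z < ε}) ≤
        ENNReal.ofReal (C * R ^ s * ε ^ ((n : ℝ) - s))) :
    ∃ C' > 0, ∀ x : EuclideanSpace ℂ (Fin n), ‖x‖ = 1 → ∀ R : ℝ, 0 < R → R ≤ 1 →
      ∫ z in Sball x R, Real.log (1 / dE E z) ∂σ ≤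
        (σ (Sball x R)).toReal * Real.log (1 / R) + C' * R ^ (n : ℝ) :=
  sigma_implies_log_integral_bound_general n E hES hEne σ s C hs hC hSig
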